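/- Let k be a field of characteristic 0, let b ≥ 1 be an integer, and for s ≠ t in k* define the 2×2 matrix M(s,t) = (1/(s−t)) · [[s^b − t^b, s t (s^{b−1} − t^{b−1})], [s^{b+1} − t^{b+1}, s t (s^b − t^b)]]. Then M(s,t) · M(−1/s, −1/t) = (−1)^{b−1} · I₂. -/

import Mathlib

/-!
Write `M = schwMat b s t`. Its determinant is `(st)^b`, by the Cassini-type identity
`(s^{n+1} - t^{n+1})^2 - (s^n - t^n)(s^{n+2} - t^{n+2}) = (st)^n (s - t)^2`.
Substituting `s ↦ -1/s`, `t ↦ -1/t` turns each entry of `M` into `±(st)^{-b}` times the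
complementary cofactor, so `M(-1/s, -1/t) = (-1)^{b+1} (st)^{-b} adj M`, and
`M · adj M = det M · 1` finishes the proof.
-/

/-- The Schwarzenberger transition matrix
`M(s,t) = (1/(s−t)) ⬝ [[s^b − t^b, st(s^{b−1} − t^{b−1})],
                       [s^{b+1} − t^{b+1}, st(s^b − t^b)]]`. -/
def schwMat {k : Type*} [Field k] (b : ℕ) (s t : k) :
    Matrix (Fin 2) (Fin 2) k :=
  (s - t)⁻¹ • !![s ^ b - t ^ b, s * t * (s ^ (b - 1) - t ^ (b - 1));
                 s ^ (b + 1) - t ^ (b + 1), s * t * (s ^ b - t ^ b)]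

theorem pow_sub_pow_cassini {R : Type*} [CommRing R] (s t : R) (n : ℕ) :
    (s ^ (n + 1) - t ^ (n + 1)) ^ 2 - (s ^ n - t ^ n) * (s ^ (n + 2) - t ^ (n + 2)) =
      (s * t) ^ n * (s - t) ^ 2 := by
  ring

theorem neg_one_div_sub_neg_one_div {k : Type*} [Field k] {x y : k} (hx : x ≠ 0)
    (hy : y ≠ 0) : -1 / x - -1 / y = (x - y) / (x * y) := by
  field_simp
  ring

section

variable {k : Type*} [Field k] {b : ℕ} {s t : k}

theorem det_schwMat (hb : 1 ≤ b) (hst : s ≠ t) : (schwMat b s t).det = (s * t) ^ b := by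
  obtain ⟨n, rfl⟩ := Nat.exists_eq_add_of_le' hb
  have hst' : s - t ≠ 0 := sub_ne_zero.mpr hst
  rw [schwMat, Matrix.det_smul, Matrix.det_fin_two_of, Fintype.card_fin, Nat.add_sub_cancel]
  field_simp
  linear_combination s * t * pow_sub_pow_cassini s t n

theorem schwMat_neg_one_div (hb : 1 ≤ b) (hs : s ≠ 0) (ht : t ≠ 0) (hst : s ≠ t) :
    schwMat b (-1 / s) (-1 / t) =
      ((-1) ^ (b + 1) / (s * t) ^ b) • (schwMat b s t).adjugate := by
  obtain ⟨n, rfl⟩ := Nat.exists_eq_add_of_le' hb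
  have hst' : s - t ≠ 0 := sub_ne_zero.mpr hst
  rw [schwMat, schwMat, Matrix.adjugate_fin_two, neg_one_div_sub_neg_one_div hs ht]
  ext i j
  fin_cases i <;> fin_cases j <;> simp [div_pow] <;> field_simp <;> ring

end

theorem stmt10_general {k : Type*} [Field k] (b : ℕ) (hb : 1 ≤ b)
    (s t : k) (hs : s ≠ 0) (ht : t ≠ 0) (hst : s ≠ t) :
    schwMat b s t * schwMat b (-1 / s) (-1 / t) =
      ((-1 : k) ^ (b - 1)) • (1 : Matrix (Fin 2) (Fin 2) k) := by
  have hst0 : (s * t) ^ b ≠ 0 := pow_ne_zero _ (mul_ne_zero hs ht)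
  rw [schwMat_neg_one_div hb hs ht hst, Matrix.mul_smul, Matrix.mul_adjugate,
    det_schwMat hb hst, smul_smul, div_mul_cancel₀ _ hst0]
  obtain ⟨n, rfl⟩ := Nat.exists_eq_add_of_le' hb
  rw [Nat.add_sub_cancel, pow_add _ n 2, neg_one_sq, mul_one]

/-- Over a field `k` of characteristic `0`, for `b ≥ 1` and
`s ≠ t` in `k*`, one has `M(s,t) ⬝ M(−1/s, −1/t) = (−1)^{b−1} ⬝ I₂`. -/
theorem stmt10 {k : Type*} [Field k] [CharZero k] (b : ℕ) (hb : 1 ≤ b)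
    (s t : k) (hs : s ≠ 0) (ht : t ≠ 0) (hst : s ≠ t) :
    schwMat b s t * schwMat b (-1 / s) (-1 / t) =
      ((-1 : k) ^ (b - 1)) • (1 : Matrix (Fin 2) (Fin 2) k) :=
  stmt10_general b hb s t hs ht hst
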